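/- arXiv:1702.05141 — 2 statements merged into one kernel-verified Lean document; each statement's English description precedes it below -/
import Mathlib

section
/- Let X be a finite set with |X| ≥ 2 and let δ be a dissimilarity map on X. Define δ_u{x,y} to be the minimum, over all finite sequences x = v₀, v₁, …, v_k = y of pairwise distinct elements of X with k ≥ 1, of max_{1≤i≤k} δ{v_{i−1}, v_i}, and let d = ‖δ − δ_u‖∞. Then the dissimilarity map u* defined by u*{x,y} = δ_u{x,y} + d/2 is an ultrametric on X, ‖δ − u*‖∞ = d/2, and every ultrametric u on X satisfies ‖δ − u‖∞ ≥ d/2. In particular u* is an ultrametric l∞-nearest to δ. -/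
/-- A dissimilarity map on `X`: symmetric with zero diagonal
(equivalently, a real number attached to each 2-element subset of `X`). -/
def IsDissim {X : Type*} (d : X → X → ℝ) : Prop :=
  (∀ x, d x x = 0) ∧ (∀ x y, d x y = d y x)

/-- An ultrametric: a dissimilarity map such that for all pairwise distinct `x,y,z`,
the maximum of the three pairwise values is attained at least twice. -/
def IsUltra {X : Type*} (d : X → X → ℝ) : Prop :=
  IsDissim d ∧ ∀ x y z : X, x ≠ y → x ≠ z → y ≠ z →
    ((d x y = d x z ∧ d y z ≤ d x y) ∨ (d x y = d y z ∧ d x z ≤ d x y) ∨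
      (d x z = d y z ∧ d x y ≤ d x z))

/-- The `l∞`-distance between two dissimilarity maps: the maximum of
`|d₁{x,y} - d₂{x,y}|` over 2-element subsets `{x,y}`. -/
noncomputable def dinf {X : Type*} (d₁ d₂ : X → X → ℝ) : ℝ :=
  sSup {r | ∃ x y : X, x ≠ y ∧ r = |d₁ x y - d₂ x y|}

/-- `(pathMin δ) x y` is the minimum, over all sequences `x = v₀, v₁, …, v_k = y`
(`k ≥ 1`) of pairwise distinct elements, of `max_{1 ≤ i ≤ k} δ(v_{i-1}, v_i)`.
This is the subdominant ultrametric `δ_u` of Chepoi--Fichet. -/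
noncomputable def pathMin {X : Type*} (δ : X → X → ℝ) (x y : X) : ℝ :=
  sInf {r | ∃ (k : ℕ) (v : ℕ → X), 1 ≤ k ∧ v 0 = x ∧ v k = y ∧
    (∀ i j, i ≤ k → j ≤ k → i ≠ j → v i ≠ v j) ∧
    r = sSup {s | ∃ i < k, s = δ (v i) (v (i + 1))}}

/-!
The subdominant ultrametric `δ_u = pathMin δ` satisfies `δ_u{x,y} ≤ t` exactly when `x` and
`y` are joined in the graph of pairs with `δ ≤ t`; this makes `δ_u`, and hence every shift of
it, an ultrametric. Since `0 ≤ δ - δ_u ≤ d`, shifting by `d/2` puts `u*` within `d/2` of `δ`,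
with equality at a pair where `δ - δ_u = d`. Conversely, if an ultrametric `u` is within `D` of
`δ`, then along an optimal path from `x` to `y` every edge has `u ≤ δ_u{x,y} + D`, so by the
ultrametric inequality `u{x,y} ≤ δ_u{x,y} + D` and `δ{x,y} - δ_u{x,y} ≤ 2D`.
-/

open SimpleGraph

section Subdominant

variable {X : Type*}

section Chain

noncomputable def chainMax (δ : X → X → ℝ) (v : ℕ → X) (k : ℕ) : ℝ :=
  sSup {s | ∃ i < k, s = δ (v i) (v (i + 1))}

variable (δ : X → X → ℝ) (v : ℕ → X) {k : ℕ}

lemma chainValues_finite : {s | ∃ i < k, s = δ (v i) (v (i + 1))}.Finite :=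
  ((Set.finite_Iio k).image fun i => δ (v i) (v (i + 1))).subset <| by
    rintro _ ⟨i, hi, rfl⟩
    exact ⟨i, hi, rfl⟩

lemma chainValues_nonempty (hk : 1 ≤ k) :
    {s | ∃ i < k, s = δ (v i) (v (i + 1))}.Nonempty :=
  ⟨_, 0, hk, rfl⟩

lemma le_chainMax {i : ℕ} (hi : i < k) : δ (v i) (v (i + 1)) ≤ chainMax δ v k :=
  le_csSup (chainValues_finite δ v).bddAbove ⟨i, hi, rfl⟩

lemma chainMax_le_iff (hk : 1 ≤ k) {t : ℝ} :
    chainMax δ v k ≤ t ↔ ∀ i < k, δ (v i) (v (i + 1)) ≤ t := by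
  refine ⟨fun h i hi => (le_chainMax δ v hi).trans h, fun h => ?_⟩
  refine csSup_le (chainValues_nonempty δ v hk) ?_
  rintro _ ⟨i, hi, rfl⟩
  exact h i hi

lemma exists_chainMax_eq (hk : 1 ≤ k) : ∃ i < k, chainMax δ v k = δ (v i) (v (i + 1)) :=
  (chainValues_nonempty δ v hk).csSup_mem (chainValues_finite δ v)

end Chain

section PathMin

variable {δ : X → X → ℝ}

def pathCosts (δ : X → X → ℝ) (x y : X) : Set ℝ :=
  {r | ∃ (k : ℕ) (v : ℕ → X), 1 ≤ k ∧ v 0 = x ∧ v k = y ∧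
    (∀ i j, i ≤ k → j ≤ k → i ≠ j → v i ≠ v j) ∧ r = chainMax δ v k}

lemma pathMin_eq_sInf (δ : X → X → ℝ) (x y : X) : pathMin δ x y = sInf (pathCosts δ x y) := rfl

lemma pathCosts_finite [Finite X] (δ : X → X → ℝ) (x y : X) : (pathCosts δ x y).Finite := by
  refine (Set.finite_range fun p : X × X => δ p.1 p.2).subset ?_
  rintro _ ⟨k, v, hk, -, -, -, rfl⟩
  obtain ⟨i, -, hi⟩ := exists_chainMax_eq δ v hk
  exact ⟨(v i, v (i + 1)), hi.symm⟩

lemma self_mem_pathCosts {x y : X} (hxy : x ≠ y) : δ x y ∈ pathCosts δ x y := by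
  refine ⟨1, fun i => if i = 0 then x else y, le_rfl, rfl, rfl, ?_, ?_⟩
  · intro i j hi hj hij
    interval_cases i <;> interval_cases j <;> simp_all [Ne.symm hxy]
  · refine le_antisymm ?_ ((chainMax_le_iff δ _ le_rfl).2 fun i hi => ?_)
    · simpa using le_chainMax δ (fun i => if i = 0 then x else y) zero_lt_one
    · simp [Nat.lt_one_iff.1 hi]

lemma pathMin_mem_pathCosts [Finite X] {x y : X} (hxy : x ≠ y) :
    pathMin δ x y ∈ pathCosts δ x y :=
  pathMin_eq_sInf δ x y ▸
    Set.Nonempty.csInf_mem ⟨_, self_mem_pathCosts hxy⟩ (pathCosts_finite δ x y)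

lemma pathMin_le_of_mem [Finite X] {x y : X} {r : ℝ} (hr : r ∈ pathCosts δ x y) :
    pathMin δ x y ≤ r :=
  pathMin_eq_sInf δ x y ▸ csInf_le (pathCosts_finite δ x y).bddBelow hr

lemma pathMin_le_self [Finite X] {x y : X} (hxy : x ≠ y) : pathMin δ x y ≤ δ x y :=
  pathMin_le_of_mem (self_mem_pathCosts hxy)

def thresholdGraph (δ : X → X → ℝ) (t : ℝ) : SimpleGraph X :=
  SimpleGraph.fromRel fun a b => δ a b ≤ t

lemma thresholdGraph_adj (hδ : ∀ x y, δ x y = δ y x) {t : ℝ} {a b : X} :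
    (thresholdGraph δ t).Adj a b ↔ a ≠ b ∧ δ a b ≤ t := by
  rw [thresholdGraph, fromRel_adj, hδ b a, or_self]

lemma pathMin_le_iff_reachable [Finite X] (hδ : ∀ x y, δ x y = δ y x) {x y : X} (hxy : x ≠ y)
    (t : ℝ) :
    pathMin δ x y ≤ t ↔ (thresholdGraph δ t).Reachable x y := by
  constructor
  · obtain ⟨k, v, hk, rfl, rfl, hinj, hcost⟩ := pathMin_mem_pathCosts hxy
    rw [hcost, chainMax_le_iff δ v hk]
    intro hle
    have hchain : ∀ n ≤ k, (thresholdGraph δ t).Reachable (v 0) (v n) := by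
      intro n hn
      induction n with
      | zero => rfl
      | succ n ih =>
        refine (ih (by omega)).trans (Adj.reachable ?_)
        exact (thresholdGraph_adj hδ).2 ⟨hinj n (n + 1) (by omega) hn (by omega), hle n hn⟩
    exact hchain k le_rfl
  · classical
    rintro ⟨p⟩
    let q : (thresholdGraph δ t).Walk x y := p.toPath
    have hq : q.IsPath := p.toPath.property
    have hlen : 1 ≤ q.length := Nat.one_le_iff_ne_zero.2 fun h => hxy (q.eq_of_length_eq_zero h)
    refine (pathMin_le_of_mem ⟨q.length, q.getVert, hlen, q.getVert_zero, q.getVert_length,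
      fun i j hi hj hij hv => hij (hq.getVert_injOn hi hj hv), rfl⟩).trans ?_
    exact (chainMax_le_iff δ _ hlen).2 fun i hi =>
      ((thresholdGraph_adj hδ).1 (q.adj_getVert_succ hi)).2

lemma pathMin_comm [Finite X] (hδ : ∀ x y, δ x y = δ y x) {x y : X} (hxy : x ≠ y) :
    pathMin δ x y = pathMin δ y x := by
  have hreach {a b : X} (hab : a ≠ b) : (thresholdGraph δ (pathMin δ a b)).Reachable b a :=
    ((pathMin_le_iff_reachable hδ hab _).1 le_rfl).symm
  exact le_antisymm ((pathMin_le_iff_reachable hδ hxy _).2 (hreach hxy.symm))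
    ((pathMin_le_iff_reachable hδ hxy.symm _).2 (hreach hxy))

lemma pathMin_le_max [Finite X] (hδ : ∀ x y, δ x y = δ y x) {x y z : X} (hxy : x ≠ y)
    (hxz : x ≠ z) (hyz : y ≠ z) :
    pathMin δ x z ≤ max (pathMin δ x y) (pathMin δ y z) := by
  rw [pathMin_le_iff_reachable hδ hxz]
  exact ((pathMin_le_iff_reachable hδ hxy _).1 (le_max_left _ _)).trans
    ((pathMin_le_iff_reachable hδ hyz _).1 (le_max_right _ _))

end PathMin

section Ultrametric

variable {u : X → X → ℝ}

lemma IsUltra.le_max (hu : IsUltra u) {x y z : X} (hxy : x ≠ y) (hxz : x ≠ z) (hyz : y ≠ z) :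
    u x z ≤ max (u x y) (u y z) := by
  rcases hu.2 x y z hxy hxz hyz with ⟨h, -⟩ | ⟨-, h⟩ | ⟨h, -⟩
  · exact h ▸ le_max_left _ _
  · exact h.trans (le_max_left _ _)
  · exact h ▸ le_max_right _ _

lemma isUltra_of_le_max (hu : IsDissim u)
    (hmax : ∀ x y z, x ≠ y → x ≠ z → y ≠ z → u x z ≤ max (u x y) (u y z)) : IsUltra u := by
  refine ⟨hu, fun x y z hxy hxz hyz => ?_⟩
  have h₁ := hmax x y z hxy hxz hyz
  have h₂ := hmax x z y hxz hxy hyz.symm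
  have h₃ := hmax y x z hxy.symm hyz hxz
  rw [hu.2 z y] at h₂
  rw [hu.2 y x] at h₃
  rcases le_total (u x y) (u x z) with h | h <;>
    rcases le_total (u x z) (u y z) with h' | h' <;>
    rcases le_total (u x y) (u y z) with h'' | h'' <;>
    simp only [max_eq_left, max_eq_right, h, h', h''] at h₁ h₂ h₃ <;>
    first
    | exact Or.inl ⟨by linarith, by linarith⟩
    | exact Or.inr (Or.inl ⟨by linarith, by linarith⟩)
    | exact Or.inr (Or.inr ⟨by linarith, by linarith⟩)

lemma IsUltra.le_of_reachable (hu : IsUltra u) {G : SimpleGraph X} {s : ℝ}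
    (hG : ∀ a b, G.Adj a b → u a b ≤ s) {x y : X} (hxy : x ≠ y) (h : G.Reachable x y) :
    u x y ≤ s := by
  obtain ⟨p⟩ := h
  induction p with
  | nil => exact absurd rfl hxy
  | @cons x w y hxw q ih =>
    by_cases hwy : w = y
    · subst hwy
      exact hG _ _ hxw
    · exact (hu.le_max hxw.ne hxy hwy).trans (max_le (hG _ _ hxw) (ih hwy))

end Ultrametric

section Dinf

variable [Fintype X] (d₁ d₂ : X → X → ℝ)

lemma dinfValues_finite : {r | ∃ x y : X, x ≠ y ∧ r = |d₁ x y - d₂ x y|}.Finite :=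
  (Set.finite_range fun p : X × X => |d₁ p.1 p.2 - d₂ p.1 p.2|).subset <| by
    rintro _ ⟨x, y, -, rfl⟩
    exact ⟨(x, y), rfl⟩

lemma abs_sub_le_dinf {x y : X} (hxy : x ≠ y) : |d₁ x y - d₂ x y| ≤ dinf d₁ d₂ :=
  le_csSup (dinfValues_finite d₁ d₂).bddAbove ⟨x, y, hxy, rfl⟩

variable {d₁ d₂}

lemma dinf_le (hcard : 2 ≤ Fintype.card X) {r : ℝ}
    (h : ∀ x y, x ≠ y → |d₁ x y - d₂ x y| ≤ r) : dinf d₁ d₂ ≤ r := by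
  obtain ⟨a, b, hab⟩ := Fintype.exists_pair_of_one_lt_card hcard
  refine csSup_le ⟨_, a, b, hab, rfl⟩ ?_
  rintro _ ⟨x, y, hxy, rfl⟩
  exact h x y hxy

lemma dinf_eq_of_le {r : ℝ} (h : ∀ x y, x ≠ y → |d₁ x y - d₂ x y| ≤ r) {a b : X}
    (hab : a ≠ b) (hr : |d₁ a b - d₂ a b| = r) : dinf d₁ d₂ = r :=
  le_antisymm (csSup_le ⟨_, a, b, hab, rfl⟩ fun _ ⟨x, y, hxy, hs⟩ => hs ▸ h x y hxy)
    (hr ▸ abs_sub_le_dinf d₁ d₂ hab)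

lemma exists_dinf_eq (hcard : 2 ≤ Fintype.card X) :
    ∃ x y : X, x ≠ y ∧ dinf d₁ d₂ = |d₁ x y - d₂ x y| := by
  obtain ⟨a, b, hab⟩ := Fintype.exists_pair_of_one_lt_card hcard
  obtain ⟨_, ⟨x, y, hxy, rfl⟩, hmax⟩ :=
    Set.exists_max_image _ id (dinfValues_finite d₁ d₂) ⟨_, a, b, hab, rfl⟩
  exact ⟨x, y, hxy, dinf_eq_of_le (fun x' y' h' => hmax _ ⟨x', y', h', rfl⟩) hxy rfl⟩

end Dinf

section Shift

variable [Finite X] [DecidableEq X] {δ : X → X → ℝ} (hδ : ∀ x y, δ x y = δ y x)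
include hδ

lemma isUltra_pathMin_add (c : ℝ) :
    IsUltra fun x y => if x = y then 0 else pathMin δ x y + c := by
  refine isUltra_of_le_max ⟨fun x => if_pos rfl, fun x y => ?_⟩ fun x y z hxy hxz hyz => ?_
  · by_cases hxy : x = y
    · subst hxy; rfl
    · simp only [if_neg hxy, if_neg (Ne.symm hxy), pathMin_comm hδ hxy]
  · simp only [if_neg hxy, if_neg hxz, if_neg hyz, max_add_add_right]
    linarith [pathMin_le_max hδ hxy hxz hyz]

end Shift

section Nearest

variable [Fintype X] {δ : X → X → ℝ}

lemma sub_pathMin_mem_Icc {x y : X} (hxy : x ≠ y) :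
    δ x y - pathMin δ x y ∈ Set.Icc 0 (dinf δ (pathMin δ)) :=
  ⟨sub_nonneg.2 (pathMin_le_self hxy), (le_abs_self _).trans (abs_sub_le_dinf _ _ hxy)⟩

lemma sub_pathMin_le_two_mul_dinf (hδ : ∀ x y, δ x y = δ y x) {u : X → X → ℝ}
    (hu : IsUltra u) {x y : X} (hxy : x ≠ y) : δ x y - pathMin δ x y ≤ 2 * dinf δ u := by
  have hedge : ∀ a b, (thresholdGraph δ (pathMin δ x y)).Adj a b →
      u a b ≤ pathMin δ x y + dinf δ u := by
    intro a b hab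
    obtain ⟨hne, hle⟩ := (thresholdGraph_adj hδ).1 hab
    linarith [neg_abs_le (δ a b - u a b), abs_sub_le_dinf δ u hne]
  have hux := hu.le_of_reachable hedge hxy ((pathMin_le_iff_reachable hδ hxy _).1 le_rfl)
  linarith [le_abs_self (δ x y - u x y), abs_sub_le_dinf δ u hxy]

end Nearest

end Subdominant

/-- Chepoi--Fichet: with `δ_u = pathMin δ` and `d = ‖δ - δ_u‖∞`, the map
`u*{x,y} = δ_u{x,y} + d/2` is an ultrametric with `‖δ - u*‖∞ = d/2`, and every
ultrametric is at `l∞`-distance at least `d/2` from `δ`; so `u*` is `l∞`-nearest to `δ`. -/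
theorem stmt2 {X : Type*} [Fintype X] [DecidableEq X] (hcard : 2 ≤ Fintype.card X)
    (δ : X → X → ℝ) (hδ : IsDissim δ) :
    IsUltra (fun x y => if x = y then 0 else pathMin δ x y + dinf δ (pathMin δ) / 2) ∧
    dinf δ (fun x y => if x = y then 0 else pathMin δ x y + dinf δ (pathMin δ) / 2) =
      dinf δ (pathMin δ) / 2 ∧
    ∀ u : X → X → ℝ, IsUltra u → dinf δ (pathMin δ) / 2 ≤ dinf δ u := by
  refine ⟨isUltra_pathMin_add hδ.2 _, ?_, fun u hu => ?_⟩
  · obtain ⟨a, b, hab, hd⟩ := exists_dinf_eq (d₁ := δ) (d₂ := pathMin δ) hcard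
    have hgap := (sub_pathMin_mem_Icc (δ := δ) hab).1
    refine dinf_eq_of_le (fun x y hxy => ?_) hab ?_
    · obtain ⟨hlo, hhi⟩ := sub_pathMin_mem_Icc (δ := δ) hxy
      rw [if_neg hxy, abs_le]
      constructor <;> linarith
    · rw [abs_of_nonneg hgap] at hd
      rw [if_neg hab, abs_eq_self.2] <;> linarith
  · have := dinf_le hcard fun x y hxy => (abs_of_nonneg (sub_pathMin_mem_Icc hxy).1).trans_le
      (sub_pathMin_le_two_mul_dinf hδ.2 hu hxy)
    linarith
end

section
/- Let n ≥ 2 and let δ be a dissimilarity map on [n] = {1,…,n}. Then δ is an ultrametric if and only if every 2-element subset {i,j} of [n] is contained in some δ-minimum spanning tree of the complete graph on [n], where a spanning tree is an (n−1)-element set of 2-element subsets of [n] containing no cycle (equivalently, a maximal acyclic edge set of the complete graph), and a spanning tree T is δ-minimum if its total weight Σ_{e∈T} δ(e) is minimal among all spanning trees. -/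
/-- A spanning tree of the complete graph on `Fin n`: an `(n-1)`-element set of
2-element subsets (non-diagonal unordered pairs) containing no cycle. -/
def IsSpanningTree (n : ℕ) (T : Finset (Sym2 (Fin n))) : Prop :=
  (∀ e ∈ T, ¬ e.IsDiag) ∧ T.card = n - 1 ∧
    (SimpleGraph.fromEdgeSet (↑T : Set (Sym2 (Fin n)))).IsAcyclic

/-!
The exchange argument for minimum spanning trees drives both directions. If `f` is an edge of a
minimum spanning tree `T` and `u, v` lie in different components of `T - f`, then
`T - f + uv` is again a spanning tree, so `δ f ≤ δ uv`, with equality keeping it minimum.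

An ultrametric is exactly a dissimilarity with `δ xy ≤ max (δ xz) (δ zy)` for distinct
`x, y, z`. Given one, every edge `f` on the tree path from `i` to `j` separates `i` from `j`
in `T - f`, and the strong triangle inequality along the path yields such an `f` with
`δ ij ≤ δ f`; exchanging `f` for `ij` gives a minimum spanning tree through `ij`.
Conversely, if `xy` lies in a minimum spanning tree `T`, then `z` is separated in `T - xy` from
`x` or from `y`, and the exchange inequality bounds `δ xy` by `δ xz` or `δ zy`.
-/

open SimpleGraph Finset

theorem max_attained_twice_of_le_max {α : Type*} [LinearOrder α] {a b c : α}
    (ha : a ≤ max b c) (hb : b ≤ max a c) (hc : c ≤ max a b) :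
    (a = b ∧ c ≤ a) ∨ (a = c ∧ b ≤ a) ∨ (b = c ∧ a ≤ b) := by
  rw [le_max_iff] at ha hb hc
  rcases le_total a b with _ | _ <;> rcases le_total b c with _ | _ <;>
    rcases le_total a c with _ | _ <;> grind

theorem isUltra_iff_le_max {X : Type*} {d : X → X → ℝ} (hd : IsDissim d) :
    IsUltra d ↔ ∀ x y z, x ≠ y → x ≠ z → y ≠ z → d x y ≤ max (d x z) (d z y) := by
  refine ⟨fun h x y z hxy hxz hyz => ?_, fun h => ⟨hd, fun x y z hxy hxz hyz => ?_⟩⟩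
  · rw [hd.2 z y]
    rcases h.2 x y z hxy hxz hyz with ⟨h, -⟩ | ⟨h, -⟩ | ⟨-, h⟩
    · exact le_max_of_le_left h.le
    · exact le_max_of_le_right h.le
    · exact le_max_of_le_left h
  · have hxy' := h x y z hxy hxz hyz
    have hxz' := h x z y hxz hxy hyz.symm
    have hyz' := h y z x hyz hxy.symm hxz.symm
    rw [hd.2 z y] at hxy'
    rw [hd.2 y x] at hyz'
    exact max_attained_twice_of_le_max hxy' hxz' hyz'

theorem Finset.sum_insert_erase_add {α β : Type*} [DecidableEq α] [AddCommMonoid β]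
    (w : α → β) {s : Finset α} {a b : α} (ha : a ∈ s) (hb : b ∉ s.erase a) :
    ∑ x ∈ insert b (s.erase a), w x + w a = ∑ x ∈ s, w x + w b := by
  rw [sum_insert hb, ← sum_erase_add s w ha, add_comm (w b), add_right_comm]

namespace SimpleGraph

variable {V : Type*} {G : SimpleGraph V}

theorem IsAcyclic.isTree_of_ncard_edgeSet [Finite V] [Nonempty V] (hG : G.IsAcyclic)
    (hcard : G.edgeSet.ncard + 1 = Nat.card V) : G.IsTree := by
  obtain ⟨F, hGF, -, hF⟩ := connected_top.exists_isTree_le_of_le_of_isAcyclic le_top hG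
  have hFcard := (isTree_iff_connected_and_card.mp hF).2
  rw [Nat.card_coe_set_eq] at hFcard
  have : G.edgeSet = F.edgeSet :=
    Set.eq_of_subset_of_ncard_le (edgeSet_mono hGF) (by omega) (Set.toFinite _)
  rwa [edgeSet_inj.mp this]

theorem IsAcyclic.not_reachable_deleteEdges_of_mem_edges (hG : G.IsAcyclic) {i j : V}
    {p : G.Walk i j} (hp : p.IsPath) {e : Sym2 V} (he : e ∈ p.edges) :
    ¬ (G.deleteEdges {e}).Reachable i j := by
  classical
  induction e using Sym2.ind with | h a b => ?_
  rw [reachable_deleteEdges_iff_exists_walk]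
  rintro ⟨q, hq⟩
  have hpq : (⟨p, hp⟩ : G.Path i j) = q.toPath := (hG.subsingleton_path i j).elim _ _
  exact hq (q.edges_toPath_subset_edges (hpq ▸ he))

theorem Walk.exists_mem_edges_le_of_le_max {α : Type*} [LinearOrder α] {w : Sym2 V → α}
    (hw : ∀ x y z, x ≠ y → x ≠ z → y ≠ z → w s(x, y) ≤ max (w s(x, z)) (w s(z, y)))
    {i j : V} (p : G.Walk i j) (hij : i ≠ j) : ∃ e ∈ p.edges, w s(i, j) ≤ w e := by
  induction p with
  | nil => exact absurd rfl hij
  | @cons i c j hic q ih =>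
    by_cases hcj : c = j
    · subst hcj
      exact ⟨s(i, c), by simp, le_rfl⟩
    obtain ⟨e, he, hle⟩ := ih hcj
    rcases le_max_iff.mp (hw i j c hij hic.ne (Ne.symm hcj)) with h | h
    · exact ⟨s(i, c), by simp, h⟩
    · exact ⟨e, by simp [he], h.trans hle⟩

theorem mk_notMem_erase_of_not_reachable [DecidableEq V]
    {S : Finset (Sym2 V)} {f : Sym2 V} {u v : V} (huv : u ≠ v)
    (hsep : ¬ ((fromEdgeSet (S : Set (Sym2 V))).deleteEdges {f}).Reachable u v) :
    s(u, v) ∉ S.erase f := by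
  rw [deleteEdges_fromEdgeSet, ← coe_erase] at hsep
  exact fun h => hsep ((fromEdgeSet_adj _).mpr ⟨h, huv⟩).reachable

end SimpleGraph

section SpanningTree

variable {n : ℕ} {T : Finset (Sym2 (Fin n))}

theorem IsSpanningTree.isTree [Nonempty (Fin n)] (hT : IsSpanningTree n T) :
    (fromEdgeSet (T : Set (Sym2 (Fin n)))).IsTree := by
  obtain ⟨hdiag, hcard, hacyc⟩ := hT
  refine hacyc.isTree_of_ncard_edgeSet ?_
  have hedges : (fromEdgeSet (T : Set (Sym2 (Fin n)))).edgeSet = T := by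
    rw [edgeSet_fromEdgeSet]
    exact sdiff_eq_left.mpr (Set.disjoint_left.mpr fun e he hd => hdiag e he hd)
  have hn : 0 < n := Fin.pos_iff_nonempty.mpr ‹_›
  rw [hedges, Set.ncard_coe_finset, hcard, Nat.card_fin]
  omega

theorem exists_isSpanningTree [Nonempty (Fin n)] : ∃ T, IsSpanningTree n T := by
  classical
  obtain ⟨F, -, hF⟩ := (connected_top : (⊤ : SimpleGraph (Fin n)).Connected).exists_isTree_le
  refine ⟨F.edgeFinset, fun e he => F.not_isDiag_of_mem_edgeSet (mem_edgeFinset.mp he), ?_, ?_⟩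
  · have := hF.card_edgeFinset
    rw [Fintype.card_fin] at this
    omega
  · rw [coe_edgeFinset, fromEdgeSet_edgeSet]
    exact hF.isAcyclic

theorem IsSpanningTree.exchange (hT : IsSpanningTree n T) {f : Sym2 (Fin n)} (hf : f ∈ T)
    {u v : Fin n} (huv : u ≠ v)
    (hsep : ¬ ((fromEdgeSet ↑T).deleteEdges {f}).Reachable u v) :
    IsSpanningTree n (insert s(u, v) (T.erase f)) := by
  obtain ⟨hdiag, hcard, hacyc⟩ := hT
  refine ⟨?_, ?_, ?_⟩
  · simp only [mem_insert, mem_erase]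
    rintro e (rfl | ⟨-, he⟩)
    exacts [by simpa using huv, hdiag e he]
  · rw [card_insert_of_notMem (mk_notMem_erase_of_not_reachable huv hsep), card_erase_of_mem hf,
      hcard]
    have := card_pos.mpr ⟨f, hf⟩
    omega
  · have hgraph : fromEdgeSet (↑(insert s(u, v) (T.erase f)) : Set (Sym2 (Fin n))) =
        (fromEdgeSet ↑T).deleteEdges {f} ⊔ edge u v := by
      rw [deleteEdges_fromEdgeSet, edge, ← fromEdgeSet_union, coe_insert, coe_erase,
        Set.insert_eq, Set.union_comm]
    rw [hgraph]
    exact (hacyc.anti (deleteEdges_le _)).sup_edge_of_not_reachable hsep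

def IsMinSpanningTree (n : ℕ) (w : Sym2 (Fin n) → ℝ) (T : Finset (Sym2 (Fin n))) : Prop :=
  IsSpanningTree n T ∧ ∀ T', IsSpanningTree n T' → ∑ e ∈ T, w e ≤ ∑ e ∈ T', w e

theorem exists_isMinSpanningTree [Nonempty (Fin n)] (w : Sym2 (Fin n) → ℝ) :
    ∃ T, IsMinSpanningTree n w T := by
  classical
  obtain ⟨T, hT, hmin⟩ := exists_min_image {T | IsSpanningTree n T} (fun T => ∑ e ∈ T, w e)
    (exists_isSpanningTree.imp fun T hT => by simpa using hT)
  exact ⟨T, (mem_filter.mp hT).2, fun T' hT' => hmin T' (by simpa using hT')⟩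

namespace IsMinSpanningTree

variable {w : Sym2 (Fin n) → ℝ} {f : Sym2 (Fin n)} {u v : Fin n}

theorem le_of_not_reachable (hT : IsMinSpanningTree n w T) (hf : f ∈ T) (huv : u ≠ v)
    (hsep : ¬ ((fromEdgeSet ↑T).deleteEdges {f}).Reachable u v) :
    w f ≤ w s(u, v) := by
  have hmin := hT.2 _ (hT.1.exchange hf huv hsep)
  have hsum := sum_insert_erase_add w hf (mk_notMem_erase_of_not_reachable huv hsep)
  linarith

theorem exchange (hT : IsMinSpanningTree n w T) (hf : f ∈ T) (huv : u ≠ v)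
    (hsep : ¬ ((fromEdgeSet ↑T).deleteEdges {f}).Reachable u v)
    (hle : w s(u, v) ≤ w f) : IsMinSpanningTree n w (insert s(u, v) (T.erase f)) := by
  refine ⟨hT.1.exchange hf huv hsep, fun T' hT' => ?_⟩
  have hsum := sum_insert_erase_add w hf (mk_notMem_erase_of_not_reachable huv hsep)
  linarith [hT.2 T' hT']

theorem le_max_of_mem (hT : IsMinSpanningTree n w T) {x y z : Fin n} (hxyT : s(x, y) ∈ T)
    (hxy : x ≠ y) (hxz : x ≠ z) (hyz : y ≠ z) :
    w s(x, y) ≤ max (w s(x, z)) (w s(z, y)) := by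
  have hsep : ¬ ((fromEdgeSet ↑T).deleteEdges {s(x, y)}).Reachable x y :=
    isAcyclic_iff_forall_adj_isBridge.mp hT.1.2.2 ((fromEdgeSet_adj _).mpr ⟨hxyT, hxy⟩)
  by_cases hxz' : ((fromEdgeSet ↑T).deleteEdges {s(x, y)}).Reachable x z
  · exact le_max_of_le_right
      (hT.le_of_not_reachable hxyT hyz.symm fun hzy => hsep (hxz'.trans hzy))
  · exact le_max_of_le_left (hT.le_of_not_reachable hxyT hxz hxz')

end IsMinSpanningTree

theorem exists_isMinSpanningTree_mem_of_le_max {w : Sym2 (Fin n) → ℝ}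
    (hw : ∀ x y z, x ≠ y → x ≠ z → y ≠ z → w s(x, y) ≤ max (w s(x, z)) (w s(z, y)))
    {i j : Fin n} (hij : i ≠ j) : ∃ T, IsMinSpanningTree n w T ∧ s(i, j) ∈ T := by
  have : Nonempty (Fin n) := ⟨i⟩
  obtain ⟨T, hT⟩ := exists_isMinSpanningTree w
  obtain ⟨p, hp⟩ := hT.1.isTree.connected.exists_isPath i j
  obtain ⟨f, hfp, hle⟩ := p.exists_mem_edges_le_of_le_max hw hij
  have hfT : f ∈ T := (edgeSet_fromEdgeSet _ ▸ p.edges_subset_edgeSet hfp).1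
  exact ⟨_, hT.exchange hfT hij (hT.1.2.2.not_reachable_deleteEdges_of_mem_edges hp hfp) hle,
    mem_insert_self _ _⟩

end SpanningTree

theorem stmt3_general (n : ℕ) (δ : Fin n → Fin n → ℝ) (hδ : IsDissim δ) :
    IsUltra δ ↔
      ∀ i j : Fin n, i ≠ j →
        ∃ T : Finset (Sym2 (Fin n)), IsSpanningTree n T ∧
          (∀ T' : Finset (Sym2 (Fin n)), IsSpanningTree n T' →
            ∑ e ∈ T, Sym2.lift ⟨δ, hδ.2⟩ e ≤ ∑ e ∈ T', Sym2.lift ⟨δ, hδ.2⟩ e) ∧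
          s(i, j) ∈ T := by
  rw [isUltra_iff_le_max hδ]
  constructor
  · intro hδu i j hij
    obtain ⟨T, ⟨hT, hmin⟩, hijT⟩ :=
      exists_isMinSpanningTree_mem_of_le_max (w := Sym2.lift ⟨δ, hδ.2⟩) hδu hij
    exact ⟨T, hT, hmin, hijT⟩
  · intro hmst x y z hxy hxz hyz
    obtain ⟨T, hT, hmin, hxyT⟩ := hmst x y hxy
    exact IsMinSpanningTree.le_max_of_mem ⟨hT, hmin⟩ hxyT hxy hxz hyz

/-- A dissimilarity map `δ` on `[n]` (`n ≥ 2`) is an ultrametric if and only if every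
2-element subset `{i,j}` of `[n]` is contained in some `δ`-minimum spanning tree of the
complete graph on `[n]`. -/
theorem stmt3 (n : ℕ) (hn : 2 ≤ n) (δ : Fin n → Fin n → ℝ) (hδ : IsDissim δ) :
    IsUltra δ ↔
      ∀ i j : Fin n, i ≠ j →
        ∃ T : Finset (Sym2 (Fin n)), IsSpanningTree n T ∧
          (∀ T' : Finset (Sym2 (Fin n)), IsSpanningTree n T' →
            ∑ e ∈ T, Sym2.lift ⟨δ, hδ.2⟩ e ≤ ∑ e ∈ T', Sym2.lift ⟨δ, hδ.2⟩ e) ∧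
          s(i, j) ∈ T :=
  stmt3_general n δ hδ
end
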